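/- arXiv:2503.15093 — 5 statements merged into one kernel-verified Lean document; each statement's English description precedes it below -/
import Mathlib

section
/- Assume f : ℝ^n → ℝ is convex and differentiable, g convex closed proper, and h(x) = Ax − b is affine. Then (x*, λ*) is an equilibrium of the PI–PGD closed-loop dynamics ẋ = −x + prox_{γg}(x − γ(∇f(x) + Aᵀλ)), λ̇ = (k_i − k_p)Ax + k_p A prox_{γg}(x − γ(∇f(x) + Aᵀλ)) − k_i b (with k_p, k_i > 0) if and only if x* is a global minimizer of min f(x) + g(x) subject to Ax = b and λ* is a corresponding Lagrange multiplier. -/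
lemma aux_eps {a b C : ℝ} (hC : 0 ≤ C) (h : ∀ t : ℝ, 0 < t → t ≤ 1 → a ≤ b + t * C) :
    a ≤ b := by
  refine le_of_forall_pos_le_add fun ε hε => ?_
  have ht0 : 0 < min 1 (ε / (C + 1)) := lt_min one_pos (by positivity)
  have := h _ ht0 (min_le_left _ _)
  have h2 : min 1 (ε / (C + 1)) * C ≤ ε := by
    have : min 1 (ε / (C + 1)) ≤ ε / (C + 1) := min_le_right _ _
    have h3 : ε / (C + 1) * C ≤ ε := by
      rw [div_mul_eq_mul_div, div_le_iff₀ (by linarith)]; nlinarith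
    nlinarith [mul_le_mul_of_nonneg_right this hC]
  linarith

lemma aux_grad_ineq {n : ℕ} {f : EuclideanSpace ℝ (Fin n) → ℝ} {w x : EuclideanSpace ℝ (Fin n)}
    (hconv : ConvexOn ℝ Set.univ f) (hg : HasGradientAt f w x) (y : EuclideanSpace ℝ (Fin n)) :
    f x + (inner ℝ w (y - x) : ℝ) ≤ f y := by
  set d := y - x with hd
  have hline : HasDerivAt (fun t : ℝ => x + t • d) d 0 := by
    simpa using ((hasDerivAt_id (0:ℝ)).smul_const d).const_add x
  have hφ : HasDerivAt (fun t : ℝ => f (x + t • d)) (inner ℝ w d : ℝ) 0 := by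
    have hg' : HasFDerivAt f (InnerProductSpace.toDual ℝ _ w) ((fun t : ℝ => x + t • d) 0) := by
      simpa using hg.hasFDerivAt
    have := hg'.comp_hasDerivAt 0 hline
    simp only [InnerProductSpace.toDual_apply_apply] at this
    exact this
  have hslope : Filter.Tendsto (slope (fun t : ℝ => f (x + t • d)) 0) (nhdsWithin 0 (Set.Ioi 0))
      (nhds (inner ℝ w d : ℝ)) :=
    (hasDerivAt_iff_tendsto_slope.mp hφ).mono_left
      (nhdsWithin_mono 0 fun t ht => ne_of_gt ht)
  have hev : ∀ᶠ t in nhdsWithin (0:ℝ) (Set.Ioi 0),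
      slope (fun t : ℝ => f (x + t • d)) 0 t ≤ f y - f x := by
    filter_upwards [Ioc_mem_nhdsGT one_pos] with t ht
    have hconvt := hconv.2 (Set.mem_univ x) (Set.mem_univ y) (by linarith [ht.2] : (0:ℝ) ≤ 1 - t)
      ht.1.le (by ring)
    simp only [smul_eq_mul] at hconvt
    have hpt : (1 - t) • x + t • y = x + t • d := by
      rw [hd]; module
    rw [hpt] at hconvt
    rw [slope_def_field, sub_zero, div_le_iff₀ ht.1]
    simp only [zero_smul, add_zero]
    nlinarith
  have := le_of_tendsto hslope hev
  linarith

lemma aux_adj {m n : ℕ} (A : Matrix (Fin m) (Fin n) ℝ) (l : EuclideanSpace ℝ (Fin m))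
    (y : EuclideanSpace ℝ (Fin n)) :
    (inner ℝ (Matrix.toEuclideanLin A.transpose l) y : ℝ)
      = inner ℝ l (Matrix.toEuclideanLin A y) := by
  have h : A.transpose = A.conjTranspose := by
    ext i j; simp [Matrix.conjTranspose]
  rw [h, Matrix.toEuclideanLin_conjTranspose_eq_adjoint, LinearMap.adjoint_inner_left]

set_option maxHeartbeats 1000000 in
/-- for convex differentiable `f`, convex closed `g`, and affine
constraints `Ax = b`, the point `(x⋆, λ⋆)` is an equilibrium of the PI–PGD
closed-loop dynamics iff `x⋆` is a global minimizer of `min f + g s.t. Ax = b`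
and `λ⋆` is a corresponding Lagrange multiplier. -/
theorem pipgd_equilibrium_iff_minimizer {n m : ℕ}
    (f : EuclideanSpace ℝ (Fin n) → ℝ) (gradf : EuclideanSpace ℝ (Fin n) → EuclideanSpace ℝ (Fin n))
    (hfconv : ConvexOn ℝ Set.univ f)
    (hf : ∀ x, HasGradientAt f (gradf x) x)
    (g : EuclideanSpace ℝ (Fin n) → ℝ)
    (hgconv : ConvexOn ℝ Set.univ g)
    (hgclosed : IsClosed {p : EuclideanSpace ℝ (Fin n) × ℝ | g p.1 ≤ p.2})
    (A : Matrix (Fin m) (Fin n) ℝ) (b : EuclideanSpace ℝ (Fin m))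
    (γ kp ki : ℝ) (hγ : 0 < γ) (hkp : 0 < kp) (hki : 0 < ki)
    (prox : EuclideanSpace ℝ (Fin n) → EuclideanSpace ℝ (Fin n))
    (hprox : ∀ x y, prox x = y ↔
      ∀ z, g y + 1 / (2 * γ) * ‖x - y‖ ^ 2 ≤ g z + 1 / (2 * γ) * ‖x - z‖ ^ 2)
    (xs : EuclideanSpace ℝ (Fin n)) (ls : EuclideanSpace ℝ (Fin m)) :
    (-xs + prox (xs - γ • (gradf xs + Matrix.toEuclideanLin A.transpose ls)) = 0 ∧
      (ki - kp) • Matrix.toEuclideanLin A xs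
        + kp • Matrix.toEuclideanLin A (prox (xs - γ • (gradf xs + Matrix.toEuclideanLin A.transpose ls)))
        - ki • b = 0)
      ↔
    ((Matrix.toEuclideanLin A xs = b ∧
        ∀ x, Matrix.toEuclideanLin A x = b → f xs + g xs ≤ f x + g x) ∧
      (∃ v : EuclideanSpace ℝ (Fin n),
        (∀ z, g xs + (inner ℝ v (z - xs) : ℝ) ≤ g z) ∧
        gradf xs + v + Matrix.toEuclideanLin A.transpose ls = 0)) := by
  set w := gradf xs + Matrix.toEuclideanLin A.transpose ls with hw
  set q := xs - γ • w with hq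
  set T := Matrix.toEuclideanLin A with hT
  clear_value w q T
  constructor
  · rintro ⟨h1, h2⟩
    have hpx : prox q = xs := by
      have : prox q = -(-xs) := by
        rw [← neg_eq_of_add_eq_zero_right h1]
      simpa using this
    rw [hpx] at h2
    -- A xs = b
    have hAb : T xs = b := by
      have h3 : ki • (T xs - b) = (ki - kp) • T xs + kp • T xs - ki • b := by module
      rw [h2] at h3
      rcases smul_eq_zero.mp h3 with h | h
      · exact absurd h (ne_of_gt hki)
      · exact sub_eq_zero.mp h
    -- subgradient
    have hpi := (hprox q xs).mp hpx
    set v : EuclideanSpace ℝ (Fin n) := -w with hv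
    have hkey : ∀ z, g xs + (inner ℝ v (z - xs) : ℝ) ≤ g z + 1 / (2 * γ) * ‖z - xs‖ ^ 2 := by
      intro z
      have hz := hpi z
      have e1 : q - xs = -(γ • w) := by rw [hq]; module
      have e2 : q - z = (xs - z) - γ • w := by rw [hq]; module
      rw [e1, e2] at hz
      rw [norm_neg] at hz
      rw [norm_sub_sq_real] at hz
      have hin : (inner ℝ (xs - z) (γ • w) : ℝ) = γ * inner ℝ (xs - z) w := real_inner_smul_right _ _ _
      have hnw : ‖γ • w‖ ^ 2 = γ ^ 2 * ‖w‖ ^ 2 := by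
        rw [norm_smul]; simp [abs_of_pos hγ]; ring
      rw [hin, hnw] at hz
      have hvz : (inner ℝ v (z - xs) : ℝ) = inner ℝ (xs - z) w := by
        rw [hv]
        rw [inner_neg_left]
        rw [show z - xs = -(xs - z) by abel, inner_neg_right, neg_neg, real_inner_comm]
      rw [hvz]
      have hγ' : γ ≠ 0 := ne_of_gt hγ
      have hexp : 1 / (2 * γ) * (‖xs - z‖ ^ 2 - 2 * (γ * (inner ℝ (xs - z) w : ℝ)) + γ ^ 2 * ‖w‖ ^ 2)
          = 1 / (2 * γ) * ‖xs - z‖ ^ 2 - (inner ℝ (xs - z) w : ℝ)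
            + 1 / (2 * γ) * (γ ^ 2 * ‖w‖ ^ 2) := by
        field_simp
      rw [hexp] at hz
      rw [show ‖z - xs‖ = ‖xs - z‖ from norm_sub_rev _ _]
      linarith
    have hsub : ∀ z, g xs + (inner ℝ v (z - xs) : ℝ) ≤ g z := by
      intro z
      refine aux_eps (C := ‖z - xs‖ ^ 2 * (1 / (2 * γ))) (by positivity) fun t ht0 ht1 => ?_
      set d := z - xs with hd
      have h1 := hkey (xs + t • d)
      have e3 : xs + t • d - xs = t • d := by abel
      rw [e3] at h1
      have hconvt := hgconv.2 (Set.mem_univ xs) (Set.mem_univ z)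
        (by linarith : (0:ℝ) ≤ 1 - t) ht0.le (by ring)
      simp only [smul_eq_mul] at hconvt
      have hpt : (1 - t) • xs + t • z = xs + t • d := by rw [hd]; module
      rw [hpt] at hconvt
      have hin : (inner ℝ v (t • d) : ℝ) = t * inner ℝ v d := real_inner_smul_right _ _ _
      have hns : ‖t • d‖ ^ 2 = t ^ 2 * ‖d‖ ^ 2 := by
        rw [norm_smul]; simp [abs_of_pos ht0]; ring
      rw [hin, hns] at h1
      have hmul : t * (g xs + (inner ℝ v d : ℝ))
          ≤ t * (g z + t * (‖d‖ ^ 2 * (1 / (2 * γ)))) := by nlinarith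
      exact le_of_mul_le_mul_left hmul ht0
    refine ⟨⟨hAb, ?_⟩, v, hsub, by rw [hv, hw]; module⟩
    -- minimality
    intro x hx
    have hgf := aux_grad_ineq hfconv (hf xs) x
    have hgg := hsub x
    have hz : (inner ℝ (gradf xs) (x - xs) : ℝ) + inner ℝ v (x - xs)
        = -(inner ℝ (Matrix.toEuclideanLin A.transpose ls) (x - xs) : ℝ) := by
      rw [hv, hw]
      rw [inner_neg_left, inner_add_left]
      ring
    have hzero : (inner ℝ (Matrix.toEuclideanLin A.transpose ls) (x - xs) : ℝ) = 0 := by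
      rw [aux_adj]
      rw [map_sub]
      rw [← hT, hx, hAb]
      simp
    rw [hzero] at hz
    linarith
  · rintro ⟨⟨hAb, _⟩, v, hsub, hveq⟩
    have hwv : w = -v := by
      have h0 : w + v = 0 := by
        rw [hw, show gradf xs + Matrix.toEuclideanLin A.transpose ls + v
          = gradf xs + v + Matrix.toEuclideanLin A.transpose ls by module]
        exact hveq
      exact eq_neg_of_add_eq_zero_left h0
    have hpx : prox q = xs := by
      rw [hprox]
      intro z
      have e1 : q - xs = γ • v := by rw [hq, hwv]; module
      have e2 : q - z = (xs - z) + γ • v := by rw [hq, hwv]; module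
      rw [e1, e2, norm_add_sq_real]
      have hin : (inner ℝ (xs - z) (γ • v) : ℝ) = γ * inner ℝ (xs - z) v := real_inner_smul_right _ _ _
      rw [hin]
      have hsz := hsub z
      have hvz : (inner ℝ v (z - xs) : ℝ) = -(inner ℝ (xs - z) v : ℝ) := by
        rw [show z - xs = -(xs - z) by abel, inner_neg_right, real_inner_comm]
      rw [hvz] at hsz
      have hpos : 0 ≤ 1 / (2 * γ) * ‖xs - z‖ ^ 2 := by positivity
      have hγ' : γ ≠ 0 := ne_of_gt hγ
      have hexp : 1 / (2 * γ) * (‖xs - z‖ ^ 2 + 2 * (γ * (inner ℝ (xs - z) v : ℝ)) + ‖γ • v‖ ^ 2)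
          = 1 / (2 * γ) * ‖xs - z‖ ^ 2 + (inner ℝ (xs - z) v : ℝ)
            + 1 / (2 * γ) * ‖γ • v‖ ^ 2 := by
        field_simp
      rw [hexp]
      linarith
    constructor
    · rw [hpx]; simp
    · rw [hpx, hAb]; module
end

section
/- Let X = Xᵀ ∈ ℝ^{n×n} satisfy x_min I ⪯ X ⪯ x_max I for some x_max ≥ x_min > 0, and let γ > 0 satisfy γ ≤ 1/x_max. Then for all g ∈ [0,1]^n, γ(diag(g) X + X diag(g)) + 2(I − diag(g)) ≻ (3/2) γ X. -/
open Matrix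

/-- Lemma 6 of Qu–Li: if `x_min I ⪯ X ⪯ x_max I` with
`x_max ≥ x_min > 0`, `0 < γ ≤ 1/x_max`, then for all `g ∈ [0,1]ⁿ`,
`γ(diag(g) X + X diag(g)) + 2(I − diag(g)) ≻ (3/2) γ X`. -/
theorem diag_contraction_lemma {n : ℕ} (X : Matrix (Fin n) (Fin n) ℝ)
    (hsymm : X.IsSymm) (xmin xmax : ℝ)
    (hxmin : 0 < xmin) (hxle : xmin ≤ xmax)
    (hlow : (X - xmin • (1 : Matrix (Fin n) (Fin n) ℝ)).PosSemidef)
    (hhigh : (xmax • (1 : Matrix (Fin n) (Fin n) ℝ) - X).PosSemidef)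
    (γ : ℝ) (hγ : 0 < γ) (hγle : γ ≤ 1 / xmax) :
    ∀ g : Fin n → ℝ, (∀ i, g i ∈ Set.Icc (0 : ℝ) 1) →
      (γ • (Matrix.diagonal g * X + X * Matrix.diagonal g)
        + (2 : ℝ) • ((1 : Matrix (Fin n) (Fin n) ℝ) - Matrix.diagonal g)
        - (3 / 2 * γ) • X).PosDef := by
  intro g hg
  have hX : Xᵀ = X := hsymm
  have hxmax : 0 < xmax := lt_of_lt_of_le hxmin hxle
  have hγx : γ * xmax ≤ 1 := by
    rw [div_eq_mul_inv, one_mul] at hγle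
    calc γ * xmax ≤ xmax⁻¹ * xmax := by nlinarith
    _ = 1 := by field_simp
  -- symmetry of the bilinear form
  have hBsymm : ∀ a b : Fin n → ℝ, a ⬝ᵥ X *ᵥ b = b ⬝ᵥ X *ᵥ a := by
    intro a b
    rw [Matrix.dotProduct_mulVec, ← Matrix.mulVec_transpose, hX, dotProduct_comm]
  -- bounds
  have hlow' : ∀ y : Fin n → ℝ, xmin * (y ⬝ᵥ y) ≤ y ⬝ᵥ X *ᵥ y := by
    intro y
    have := hlow.dotProduct_mulVec_nonneg y
    simp only [star_trivial, Matrix.sub_mulVec, Matrix.smul_mulVec, Matrix.one_mulVec,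
      dotProduct_sub, dotProduct_smul, smul_eq_mul] at this
    linarith
  have hhigh' : ∀ y : Fin n → ℝ, y ⬝ᵥ X *ᵥ y ≤ xmax * (y ⬝ᵥ y) := by
    intro y
    have := hhigh.dotProduct_mulVec_nonneg y
    simp only [star_trivial, Matrix.sub_mulVec, Matrix.smul_mulVec, Matrix.one_mulVec,
      dotProduct_sub, dotProduct_smul, smul_eq_mul] at this
    linarith
  rw [Matrix.posDef_iff_dotProduct_mulVec]
  constructor
  · -- Hermitian
    have hD : (Matrix.diagonal g)ᵀ = Matrix.diagonal g := Matrix.diagonal_transpose g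
    rw [Matrix.IsHermitian, Matrix.conjTranspose_eq_transpose_of_trivial]
    simp only [Matrix.transpose_sub, Matrix.transpose_add, Matrix.transpose_smul,
      Matrix.transpose_mul, Matrix.transpose_one, hX, hD]
    abel
  · intro v hv
    set u : Fin n → ℝ := fun i => g i * v i with hu
    set w : Fin n → ℝ := fun i => (1 - g i) * v i with hw
    have hvuw : v = u + w := by funext i; simp [hu, hw]; ring
    have hDz : ∀ z : Fin n → ℝ, v ⬝ᵥ (Matrix.diagonal g *ᵥ z) = u ⬝ᵥ z := by
      intro z
      simp only [dotProduct, Matrix.mulVec_diagonal, hu]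
      exact Finset.sum_congr rfl fun i _ => by ring
    -- key identity
    have key : v ⬝ᵥ ((γ • (Matrix.diagonal g * X + X * Matrix.diagonal g)
        + (2 : ℝ) • ((1 : Matrix (Fin n) (Fin n) ℝ) - Matrix.diagonal g)
        - (3 / 2 * γ) • X) *ᵥ v)
        = γ / 2 * ((u - w) ⬝ᵥ X *ᵥ (u - w)) + 2 * (u ⬝ᵥ w)
          + 2 * (w ⬝ᵥ w - γ * (w ⬝ᵥ X *ᵥ w)) := by
      have hDu : Matrix.diagonal g *ᵥ v = u := by
        funext i; simp [Matrix.mulVec_diagonal, hu]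
      have e1 : v ⬝ᵥ ((Matrix.diagonal g * X) *ᵥ v) = u ⬝ᵥ X *ᵥ v := by
        rw [← Matrix.mulVec_mulVec, hDz]
      have e2 : v ⬝ᵥ ((X * Matrix.diagonal g) *ᵥ v) = v ⬝ᵥ X *ᵥ u := by
        rw [← Matrix.mulVec_mulVec, hDu]
      have e3 : v ⬝ᵥ (Matrix.diagonal g *ᵥ v) = u ⬝ᵥ v := hDz v
      simp only [Matrix.sub_mulVec, Matrix.add_mulVec, Matrix.smul_mulVec,
        Matrix.one_mulVec, dotProduct_sub, dotProduct_add,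
        dotProduct_smul, smul_eq_mul, e1, e2, e3]
      rw [hvuw]
      simp only [Matrix.mulVec_add, dotProduct_add, add_dotProduct,
        Matrix.mulVec_sub, dotProduct_sub, sub_dotProduct]
      rw [hBsymm w u, dotProduct_comm w u]
      ring
    rw [star_trivial, key]
    -- positivity of each piece
    have huw : 0 ≤ u ⬝ᵥ w := by
      apply Finset.sum_nonneg
      intro i _
      have h0 := (hg i).1
      have h1 := (hg i).2
      simp only [hu, hw]
      nlinarith [sq_nonneg (v i), mul_nonneg h0 (sub_nonneg.2 h1)]
    have hds : ∀ y : Fin n → ℝ, 0 ≤ y ⬝ᵥ y := fun y =>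
      Finset.sum_nonneg fun i _ => mul_self_nonneg _
    have hww : 0 ≤ w ⬝ᵥ w - γ * (w ⬝ᵥ X *ᵥ w) := by
      have h1 := hhigh' w
      have h2 : 0 ≤ w ⬝ᵥ w := hds w
      nlinarith
    by_cases huw' : u = w
    · -- then v = 2u ≠ 0, so u ⬝ᵥ w = u ⬝ᵥ u > 0
      have hune : u ≠ 0 := by
        intro h0
        apply hv
        rw [hvuw, ← huw', h0]; simp
      have : 0 < u ⬝ᵥ w := by
        rw [← huw']
        have := hds u
        rcases lt_or_eq_of_le this with h | h
        · exact h
        · exact absurd ((dotProduct_self_eq_zero).mp h.symm) hune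
      have hq : 0 ≤ (u - w) ⬝ᵥ X *ᵥ (u - w) := by
        have := hlow' (u - w)
        have := hds (u - w)
        nlinarith
      nlinarith
    · have hne : u - w ≠ 0 := sub_ne_zero_of_ne huw'
      have hq : 0 < (u - w) ⬝ᵥ X *ᵥ (u - w) := by
        have h1 := hlow' (u - w)
        have h2 : 0 < (u - w) ⬝ᵥ (u - w) := by
          rcases lt_or_eq_of_le (hds (u - w)) with h | h
          · exact h
          · exact absurd ((dotProduct_self_eq_zero).mp h.symm) hne
        nlinarith
      nlinarith
end

section
/- Let B, G ∈ ℝ^{n×n} be symmetric with ρ I ⪯ B ⪯ L I (ρ > 0) and 0 ⪯ G ⪯ I, and let γ ∈ (0, 1/L] and p > 0. Then the matrix Q₁₁ := 2p I − 2p G + pγ(BG + GB) satisfies Q₁₁ ≻ (3/2)γp B, and in particular Q₁₁ ≻ (3/2)γρp I ≻ 0. -/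
open Matrix

namespace Q11Aux

variable {n : ℕ}

lemma psd_smul {A : Matrix (Fin n) (Fin n) ℝ} (hA : A.PosSemidef) {c : ℝ} (hc : 0 ≤ c) :
    (c • A).PosSemidef := by
  exact hA.smul hc

lemma posdef_smul {A : Matrix (Fin n) (Fin n) ℝ} (hA : A.PosDef) {c : ℝ} (hc : 0 < c) :
    (c • A).PosDef := by
  exact hA.smul hc

lemma dot_symm {A : Matrix (Fin n) (Fin n) ℝ} (hA : A.IsSymm) (x y : Fin n → ℝ) :
    x ⬝ᵥ (A *ᵥ y) = (A *ᵥ x) ⬝ᵥ y := by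
  rw [Matrix.dotProduct_mulVec, ← Matrix.mulVec_transpose, hA]

lemma key {C M : Matrix (Fin n) (Fin n) ℝ}
    (hCs : C.IsSymm) (hMs : M.IsSymm) {ρ' : ℝ} (hρ' : 0 < ρ')
    (hClow : (C - ρ' • (1 : Matrix (Fin n) (Fin n) ℝ)).PosSemidef)
    (hChigh : ((1 : Matrix (Fin n) (Fin n) ℝ) - C).PosSemidef)
    (hM0 : M.PosSemidef)
    (hM1 : ((1 : Matrix (Fin n) (Fin n) ℝ) - M).PosSemidef) :
    (C + (4:ℝ) • M - (2:ℝ) • (C * M + M * C)).PosDef := by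
  have hCherm : C.IsHermitian := by
    rw [Matrix.IsHermitian, conjTranspose_eq_transpose_of_trivial]; exact hCs
  have hCpsd : C.PosSemidef := by
    have h := hClow.add (psd_smul Matrix.PosSemidef.one hρ'.le)
    simpa using h
  obtain ⟨S, hSherm, hSS⟩ : ∃ S : Matrix (Fin n) (Fin n) ℝ, Sᴴ = S ∧ S * S = C :=
    open scoped MatrixOrder in
    ⟨CFC.sqrt C, (CFC.sqrt_nonneg C).posSemidef.1.eq, CFC.sqrt_mul_sqrt_self C hCpsd.nonneg⟩
  set D : Matrix (Fin n) (Fin n) ℝ := (2:ℝ) • (1 : Matrix (Fin n) (Fin n) ℝ) - C with hDdef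
  have hDs : D.IsSymm := by
    rw [Matrix.IsSymm, hDdef, transpose_sub, transpose_smul, transpose_one, hCs]
  have hDherm : D.IsHermitian := by
    rw [Matrix.IsHermitian, conjTranspose_eq_transpose_of_trivial]; exact hDs
  have hP1 : (C * (1 - C)).PosSemidef := by
    have h := hChigh.conjTranspose_mul_mul_same S
    have heq : Sᴴ * (1 - C) * S = C * (1 - C) := by
      rw [hSherm, ← hSS]; noncomm_ring
    rwa [heq] at h
  have hP2 : (C * ((1 - M) * C)).PosSemidef := by
    have h := hM1.conjTranspose_mul_mul_same C
    rwa [hCherm.eq, Matrix.mul_assoc] at h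
  have hP3 : (D * (M * D)).PosSemidef := by
    have h := hM0.conjTranspose_mul_mul_same D
    rwa [hDherm.eq, Matrix.mul_assoc] at h
  have hid : C * (1 - C) + C * ((1 - M) * C) + D * (M * D)
      = C + (4:ℝ) • M - (2:ℝ) • (C * M + M * C) := by
    rw [hDdef]
    simp only [Matrix.mul_sub, Matrix.sub_mul, Matrix.mul_add, Matrix.add_mul,
      Matrix.mul_one, Matrix.one_mul, Matrix.smul_mul, Matrix.mul_smul,
      smul_sub, smul_add, smul_smul, Matrix.mul_assoc]
    module
  have hpsd : (C + (4:ℝ) • M - (2:ℝ) • (C * M + M * C)).PosSemidef := by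
    rw [← hid]; exact (hP1.add hP2).add hP3
  refine .of_dotProduct_mulVec_pos hpsd.1 (fun x hx => ?_)
  rcases lt_or_ge 0 (star x ⬝ᵥ (C + (4:ℝ) • M - (2:ℝ) • (C * M + M * C)) *ᵥ x) with h | h
  · exact h
  exfalso
  have hstar : star x = x := star_trivial x
  have hsum : star x ⬝ᵥ ((C * (1 - C)) *ᵥ x) + star x ⬝ᵥ ((C * ((1 - M) * C)) *ᵥ x)
      + star x ⬝ᵥ ((D * (M * D)) *ᵥ x) ≤ 0 := by
    rw [← dotProduct_add, ← dotProduct_add, ← add_mulVec, ← add_mulVec, hid]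
    exact h
  have n1 := hP1.dotProduct_mulVec_nonneg x
  have n2 := hP2.dotProduct_mulVec_nonneg x
  have n3 := hP3.dotProduct_mulVec_nonneg x
  have e1 : star x ⬝ᵥ ((C * (1 - C)) *ᵥ x) = 0 := le_antisymm (by linarith) n1
  have e2 : star x ⬝ᵥ ((C * ((1 - M) * C)) *ᵥ x) = 0 := le_antisymm (by linarith) n2
  have e3 : star x ⬝ᵥ ((D * (M * D)) *ᵥ x) = 0 := le_antisymm (by linarith) n3
  set u : Fin n → ℝ := C *ᵥ x with hudef
  -- from e1 : C *ᵥ u = u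
  have k1 := (hP1.dotProduct_mulVec_zero_iff x).mp e1
  have hu : C *ᵥ u = u := by
    have heq : (C * (1 - C)) *ᵥ x = u - C *ᵥ u := by
      rw [Matrix.mul_sub, Matrix.mul_one, Matrix.sub_mulVec, ← Matrix.mulVec_mulVec]
    rw [heq] at k1
    exact (sub_eq_zero.mp k1).symm
  -- from e2 : M *ᵥ u = u
  have e2' : star u ⬝ᵥ ((1 - M) *ᵥ u) = 0 := by
    rw [star_trivial]
    rw [hstar, ← Matrix.mulVec_mulVec, dot_symm hCs, ← Matrix.mulVec_mulVec] at e2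
    exact e2
  have k2 := (hM1.dotProduct_mulVec_zero_iff u).mp e2'
  have hMu : M *ᵥ u = u := by
    rw [Matrix.sub_mulVec, Matrix.one_mulVec] at k2
    exact (sub_eq_zero.mp k2).symm
  -- from e3 : M *ᵥ (D *ᵥ x) = 0
  set w : Fin n → ℝ := D *ᵥ x with hwdef
  have e3' : star w ⬝ᵥ (M *ᵥ w) = 0 := by
    rw [star_trivial]
    rw [hstar, ← Matrix.mulVec_mulVec, dot_symm hDs, ← Matrix.mulVec_mulVec] at e3
    exact e3
  have k3 := (hM0.dotProduct_mulVec_zero_iff w).mp e3'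
  have hw : w = (2:ℝ) • x - u := by
    rw [hwdef, hDdef, Matrix.sub_mulVec, smul_mulVec, Matrix.one_mulVec]
  have hMx : (2:ℝ) • (M *ᵥ x) = u := by
    rw [hw, Matrix.mulVec_sub, hMu, Matrix.mulVec_smul, sub_eq_zero] at k3
    exact k3
  -- scalar contradiction
  have s1 : u ⬝ᵥ ((2:ℝ) • (M *ᵥ x)) = u ⬝ᵥ u := by rw [hMx]
  have s2 : u ⬝ᵥ ((2:ℝ) • (M *ᵥ x)) = 2 * (x ⬝ᵥ u) := by
    rw [dotProduct_smul, smul_eq_mul, dot_symm hMs, hMu, dotProduct_comm]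
  have s3 : u ⬝ᵥ u = x ⬝ᵥ u := by
    calc u ⬝ᵥ u = (C *ᵥ x) ⬝ᵥ u := rfl
    _ = x ⬝ᵥ (C *ᵥ u) := (dot_symm hCs x u).symm
    _ = x ⬝ᵥ u := by rw [hu]
  have hzero : x ⬝ᵥ u = 0 := by
    have := s1
    rw [s2, s3] at this
    linarith
  have hxx : 0 < x ⬝ᵥ x := by
    have := Matrix.dotProduct_star_self_pos_iff (v := x) |>.mpr hx
    rwa [hstar] at this
  have hlow := hClow.dotProduct_mulVec_nonneg x
  rw [hstar, Matrix.sub_mulVec, dotProduct_sub, smul_mulVec, Matrix.one_mulVec,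
    dotProduct_smul, smul_eq_mul] at hlow
  have : 0 < x ⬝ᵥ u := by nlinarith
  linarith

end Q11Aux

/-- for symmetric `ρ I ⪯ B ⪯ L I` (`ρ > 0`), symmetric `0 ⪯ G ⪯ I`,
`γ ∈ (0, 1/L]` and `p > 0`, the matrix `Q₁₁ := 2p I − 2p G + pγ(BG + GB)` satisfies
`Q₁₁ ≻ (3/2)γp B ⪰ (3/2)γρp I ≻ 0`. -/
theorem Q11_lower_bound {n : ℕ} (B G : Matrix (Fin n) (Fin n) ℝ)
    (hBsymm : B.IsSymm) (hGsymm : G.IsSymm)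
    (ρ L : ℝ) (hρ : 0 < ρ) (hρL : ρ ≤ L)
    (hBlow : (B - ρ • (1 : Matrix (Fin n) (Fin n) ℝ)).PosSemidef)
    (hBhigh : (L • (1 : Matrix (Fin n) (Fin n) ℝ) - B).PosSemidef)
    (hGpsd : G.PosSemidef) (hGle : ((1 : Matrix (Fin n) (Fin n) ℝ) - G).PosSemidef)
    (γ : ℝ) (hγ : 0 < γ) (hγle : γ ≤ 1 / L) (p : ℝ) (hp : 0 < p) :
    ((2 * p) • (1 : Matrix (Fin n) (Fin n) ℝ) - (2 * p) • G + (p * γ) • (B * G + G * B)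
        - (3 / 2 * γ * p) • B).PosDef ∧
    ((2 * p) • (1 : Matrix (Fin n) (Fin n) ℝ) - (2 * p) • G + (p * γ) • (B * G + G * B)
        - (3 / 2 * γ * ρ * p) • (1 : Matrix (Fin n) (Fin n) ℝ)).PosDef := by
  have hL : (0:ℝ) < L := lt_of_lt_of_le hρ hρL
  have hγL : γ * L ≤ 1 := (le_div_iff₀ hL).mp hγle
  set C : Matrix (Fin n) (Fin n) ℝ := γ • B with hCdef
  set M : Matrix (Fin n) (Fin n) ℝ := 1 - G with hMdef
  have hCs : C.IsSymm := by
    rw [Matrix.IsSymm, hCdef, transpose_smul, hBsymm]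
  have hMs : M.IsSymm := by
    rw [Matrix.IsSymm, hMdef, transpose_sub, transpose_one, hGsymm]
  have hρ' : 0 < γ * ρ := mul_pos hγ hρ
  have hClow : (C - (γ * ρ) • (1 : Matrix (Fin n) (Fin n) ℝ)).PosSemidef := by
    have h := Q11Aux.psd_smul hBlow hγ.le
    have heq : γ • (B - ρ • (1 : Matrix (Fin n) (Fin n) ℝ))
        = C - (γ * ρ) • (1 : Matrix (Fin n) (Fin n) ℝ) := by
      rw [hCdef]; module
    rwa [heq] at h
  have hChigh : ((1 : Matrix (Fin n) (Fin n) ℝ) - C).PosSemidef := by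
    have h := (Q11Aux.psd_smul hBhigh hγ.le).add
      (Q11Aux.psd_smul (Matrix.PosSemidef.one (n := Fin n) (R := ℝ)) (by nlinarith : (0:ℝ) ≤ 1 - γ * L))
    have heq : γ • (L • (1 : Matrix (Fin n) (Fin n) ℝ) - B)
        + (1 - γ * L) • (1 : Matrix (Fin n) (Fin n) ℝ)
        = (1 : Matrix (Fin n) (Fin n) ℝ) - C := by
      rw [hCdef]; module
    rwa [heq] at h
  have hM1 : ((1 : Matrix (Fin n) (Fin n) ℝ) - M).PosSemidef := by
    rw [hMdef]; simpa using hGpsd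
  have hF := Q11Aux.key hCs hMs hρ' hClow hChigh hGle hM1
  have hQ1 : ((2 * p) • (1 : Matrix (Fin n) (Fin n) ℝ) - (2 * p) • G + (p * γ) • (B * G + G * B)
      - (3 / 2 * γ * p) • B)
      = (p / 2) • (C + (4:ℝ) • M - (2:ℝ) • (C * M + M * C)) := by
    rw [hCdef, hMdef]
    simp only [Matrix.mul_sub, Matrix.sub_mul, Matrix.mul_one, Matrix.one_mul,
      Matrix.smul_mul, Matrix.mul_smul, smul_sub, smul_add, smul_smul]
    module
  have h1 : ((2 * p) • (1 : Matrix (Fin n) (Fin n) ℝ) - (2 * p) • G + (p * γ) • (B * G + G * B)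
      - (3 / 2 * γ * p) • B).PosDef := by
    rw [hQ1]
    exact Q11Aux.posdef_smul hF (by positivity)
  refine ⟨h1, ?_⟩
  have hQ2 : ((2 * p) • (1 : Matrix (Fin n) (Fin n) ℝ) - (2 * p) • G + (p * γ) • (B * G + G * B)
      - (3 / 2 * γ * ρ * p) • (1 : Matrix (Fin n) (Fin n) ℝ))
      = ((2 * p) • (1 : Matrix (Fin n) (Fin n) ℝ) - (2 * p) • G + (p * γ) • (B * G + G * B)
      - (3 / 2 * γ * p) • B) + (3 / 2 * γ * p) • (B - ρ • (1 : Matrix (Fin n) (Fin n) ℝ)) := by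
    module
  rw [hQ2]
  exact h1.add_posSemidef (Q11Aux.psd_smul hBlow (by positivity))
end

section
/- Let f : ℝ^n → ℝ be twice differentiable with ρ I ⪯ ∇²f(x) ⪯ L I for all x (0 < ρ ≤ L), let A ∈ ℝ^{m×n} have full row rank, g convex closed proper, k_p = k_i > 0, γ ∈ (0, 1/L], and p ∈ [max(k_p L/3, k_p(1 − 2γρ)/γ), k_p/γ]. Then for the PI–PGD vector field F(x,λ) = (−x + prox_{γg}(x − γ(∇f(x) + Aᵀλ)), (k_i − k_p)Ax + k_p A prox_{γg}(x − γ(∇f(x) + Aᵀλ)) − k_i b), the Jacobian DF(z), wherever it exists, satisfies P DF(z) + DF(z)ᵀ P ⪯ 0, where P = diag(p I_n, I_m). Consequently the PI–PGD is weakly infinitesimally contracting with respect to ‖·‖_P. -/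
open Matrix

variable {n : ℕ}

lemma psd_smul {k : Type*} [Fintype k] {M : Matrix k k ℝ} (hM : M.PosSemidef) {c : ℝ}
    (hc : 0 ≤ c) : (c • M).PosSemidef := by
  constructor
  · unfold Matrix.IsHermitian
    rw [conjTranspose_smul, hM.isHermitian.eq]
    simp
  · intro x
    exact (hM.smul hc).2 x

lemma psd_smul_one {k : Type*} [Fintype k] [DecidableEq k] {c : ℝ} (hc : 0 ≤ c) :
    (c • (1 : Matrix k k ℝ)).PosSemidef :=
  psd_smul Matrix.PosSemidef.one hc

open scoped MatrixOrder in
lemma psd_sq_bound {D : Matrix (Fin n) (Fin n) ℝ} {d : ℝ} (hD : D.PosSemidef)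
    (hdD : (d • (1 : Matrix (Fin n) (Fin n) ℝ) - D).PosSemidef) (hd : 0 ≤ d) :
    ((d^2) • (1 : Matrix (Fin n) (Fin n) ℝ) - D * D).PosSemidef := by
  set S := CFC.sqrt (d • (1 : Matrix (Fin n) (Fin n) ℝ) - D) with hS
  have hSS : S * S = d • 1 - D := CFC.sqrt_mul_sqrt_self _ hdD.nonneg
  have hSherm : Sᴴ = S := (CFC.sqrt_nonneg _).posSemidef.isHermitian.eq
  have hsum : (d • (1 : Matrix (Fin n) (Fin n) ℝ) + D).PosSemidef :=
    (psd_smul_one hd).add hD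
  have key : S * (d • (1 : Matrix (Fin n) (Fin n) ℝ) + D) * Sᴴ
      = (d^2) • (1 : Matrix (Fin n) (Fin n) ℝ) - D * D := by
    rw [hSherm]
    have hD' : D = d • (1 : Matrix (Fin n) (Fin n) ℝ) - S * S := by rw [hSS]; abel
    rw [hD']
    simp only [Matrix.mul_add, Matrix.add_mul, Matrix.mul_sub, Matrix.sub_mul,
      Matrix.mul_smul, Matrix.smul_mul, Matrix.mul_one, Matrix.one_mul, smul_smul,
      Matrix.mul_assoc]
    module
  exact key ▸ hsum.mul_mul_conjTranspose_same S

lemma key_scalar {ρ L γ kp p : ℝ} (hρ : 0 < ρ) (hρL : ρ ≤ L) (hkp : 0 < kp) (hγ : 0 < γ)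
    (hγL : γ * L ≤ 1) (h1 : kp * L / 3 ≤ p) (h2 : kp * (1 - 2 * γ * ρ) / γ ≤ p)
    (h3 : p ≤ kp / γ) :
    (γ * p + kp * (1 - γ * ρ))^2 ≤ 4 * (γ * kp * p) := by
  have h2' : kp * (1 - 2 * (γ * ρ)) ≤ γ * p := by
    have := (div_le_iff₀ hγ).mp h2; nlinarith [this]
  have h3' : γ * p ≤ kp := by
    have := (le_div_iff₀ hγ).mp h3; nlinarith [this]
  have h1' : kp * (γ * L) / 3 ≤ γ * p := by nlinarith [mul_le_mul_of_nonneg_left h1 hγ.le]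
  have hab : γ * ρ ≤ γ * L := by nlinarith
  have ha0 : 0 < γ * ρ := mul_pos hγ hρ
  set t := γ * p
  set a := γ * ρ
  set b := γ * L
  have goal' : (t + kp * (1 - a))^2 ≤ 4 * (kp * t) := by
    rcases le_or_gt a (4/9) with hc | hc
    · have e1 : 0 ≤ (t - kp*(1 - 2*a)) * (kp - t) :=
        mul_nonneg (by linarith) (by linarith)
      have e2 : 0 ≤ 4*t - kp*a := by
        nlinarith [mul_nonneg hkp.le (show (0:ℝ) ≤ 4 - 9*a by linarith)]
      have e3 : 0 ≤ kp * (a * (4*t - kp*a)) :=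
        mul_nonneg hkp.le (mul_nonneg ha0.le e2)
      nlinarith [e1, e3]
    · have e1 : 0 ≤ (t - kp*b/3) * (kp - t) := mul_nonneg (by linarith) (by linarith)
      have e2 : 0 ≤ (t - kp*b/3) * kp * (1 + 2*a - b/3) := by
        apply mul_nonneg (mul_nonneg (by linarith) hkp.le); linarith
      nlinarith [e1, e2,
        mul_nonneg (mul_nonneg hkp.le hkp.le)
          (mul_nonneg (sub_nonneg.2 hab) (sub_nonneg.2 hγL)),
        mul_nonneg (mul_nonneg hkp.le hkp.le)
          (mul_nonneg (show (0:ℝ) ≤ a - 4/9 by linarith) (show (0:ℝ) ≤ 1 - a by linarith)),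
        mul_nonneg (mul_nonneg hkp.le hkp.le)
          (mul_nonneg (sub_nonneg.2 hab) (show (0:ℝ) ≤ 1 + a by linarith))]
  have e : 4 * (kp * t) = 4 * (γ * kp * p) := by show 4*(kp*(γ*p)) = _; ring
  linarith [goal', e.le]

/-- weak contractivity LMI of the PI–PGD: with `k_p = k_i > 0`,
`γ ∈ (0, 1/L]`, `p ∈ [max(k_p L/3, k_p(1−2γρ)/γ), k_p/γ]`, `A` of full row rank,
every Jacobian of the PI–PGD vector field — which has the block form
`[[−I + G(I − γB), −γGAᵀ],[(k_i − k_p)A + k_p A G(I − γB), −γ k_p A G Aᵀ]]`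
with `B = ∇²f(x)` satisfying `ρI ⪯ B ⪯ LI` and `G = D prox_{γg}` satisfying
`0 ⪯ G ⪯ I` — satisfies `P J + Jᵀ P ⪯ 0` for `P = diag(p I, I)`,
i.e. the PI–PGD is weakly infinitesimally contracting w.r.t. `‖·‖_P`. -/
theorem pipgd_weak_contractivity_LMI {n m : ℕ}
    (A : Matrix (Fin m) (Fin n) ℝ) (hA : A.rank = m)
    (ρ L : ℝ) (hρ : 0 < ρ) (hρL : ρ ≤ L)
    (γ kp ki p : ℝ) (hkpki : kp = ki) (hkp : 0 < kp)
    (hγ : 0 < γ) (hγle : γ ≤ 1 / L)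
    (hplow : max (kp * L / 3) (kp * (1 - 2 * γ * ρ) / γ) ≤ p) (hphigh : p ≤ kp / γ) :
    ∀ B G : Matrix (Fin n) (Fin n) ℝ, B.IsSymm → G.IsSymm →
      (B - ρ • (1 : Matrix (Fin n) (Fin n) ℝ)).PosSemidef →
      (L • (1 : Matrix (Fin n) (Fin n) ℝ) - B).PosSemidef →
      G.PosSemidef → ((1 : Matrix (Fin n) (Fin n) ℝ) - G).PosSemidef →
      (-(Matrix.fromBlocks (p • (1 : Matrix (Fin n) (Fin n) ℝ)) 0 0
            (1 : Matrix (Fin m) (Fin m) ℝ) *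
          Matrix.fromBlocks (-1 + G * (1 - γ • B)) (-γ • (G * A.transpose))
            ((ki - kp) • A + kp • (A * (G * (1 - γ • B)))) (-(γ * kp) • (A * G * A.transpose))
        + (Matrix.fromBlocks (-1 + G * (1 - γ • B)) (-γ • (G * A.transpose))
            ((ki - kp) • A + kp • (A * (G * (1 - γ • B)))) (-(γ * kp) • (A * G * A.transpose))).transpose *
          Matrix.fromBlocks (p • (1 : Matrix (Fin n) (Fin n) ℝ)) 0 0
            (1 : Matrix (Fin m) (Fin m) ℝ))).PosSemidef := by
  subst hkpki
  intro B G hBs hGs hBρ hBL hG hG1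
  have hL : 0 < L := lt_of_lt_of_le hρ hρL
  have hγL : γ * L ≤ 1 := by
    have := (le_div_iff₀ hL).mp hγle; linarith
  have hp : 0 < p := by
    have h1 : kp * L / 3 ≤ p := le_trans (le_max_left _ _) hplow
    have : 0 < kp * L / 3 := by positivity
    linarith
  have hγρ1 : γ * ρ ≤ 1 := by nlinarith
  -- matrices
  set C : Matrix (Fin n) (Fin n) ℝ := (γ*p - kp) • 1 + (γ*kp) • B with hC
  set D : Matrix (Fin n) (Fin n) ℝ := (γ*p + kp) • 1 - (γ*kp) • B with hD
  set d : ℝ := γ*p + kp*(1 - γ*ρ) with hd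
  set W : Matrix (Fin n) (Fin n) ℝ := (2*(γ*kp)) • 1 with hW
  set X : Matrix (Fin n) (Fin n) ℝ := (4*(γ*kp*p)) • 1 - D * G * D with hX
  -- transposes / hermitian facts
  have hBt : Bᵀ = B := hBs
  have hGt : Gᵀ = G := hGs
  have hCt : Cᵀ = C := by
    rw [hC]; simp [transpose_add, transpose_smul, hBt]
  have hWt : Wᵀ = W := by rw [hW]; simp
  have hCh : Cᴴ = C := by rw [conjTranspose_eq_transpose_of_trivial, hCt]
  have hWh : Wᴴ = W := by rw [conjTranspose_eq_transpose_of_trivial, hWt]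
  have hDh : Dᴴ = D := by
    rw [conjTranspose_eq_transpose_of_trivial, hD]
    simp [transpose_sub, transpose_smul, hBt]
  -- PSD facts
  have hDpsd : D.PosSemidef := by
    have : D = (γ*p) • (1 : Matrix (Fin n) (Fin n) ℝ)
        + ((kp - γ*kp*L) • (1 : Matrix (Fin n) (Fin n) ℝ)
          + (γ*kp) • (L • (1 : Matrix (Fin n) (Fin n) ℝ) - B)) := by
      rw [hD]; module
    rw [this]
    refine (psd_smul_one (by positivity)).add ((psd_smul_one ?_).add (psd_smul hBL (by positivity)))
    nlinarith
  have hdD : (d • (1 : Matrix (Fin n) (Fin n) ℝ) - D).PosSemidef := by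
    have : d • (1 : Matrix (Fin n) (Fin n) ℝ) - D
        = (γ*kp) • (B - ρ • (1 : Matrix (Fin n) (Fin n) ℝ)) := by
      rw [hd, hD]; module
    rw [this]; exact psd_smul hBρ (by positivity)
  have hd0 : 0 ≤ d := by
    have : 0 ≤ kp * (1 - γ*ρ) := by nlinarith
    have h2 : 0 < γ * p := by positivity
    rw [hd]; linarith
  have hDsq : ((d^2) • (1 : Matrix (Fin n) (Fin n) ℝ) - D * D).PosSemidef :=
    psd_sq_bound hDpsd hdD hd0
  have hscal : (0:ℝ) ≤ 4*(γ*kp*p) - d^2 := by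
    have := key_scalar hρ hρL hkp hγ hγL (le_trans (le_max_left _ _) hplow)
      (le_trans (le_max_right _ _) hplow) hphigh
    rw [hd]; linarith
  have hXpsd : X.PosSemidef := by
    have hsplit : X = (4*(γ*kp*p) - d^2) • (1 : Matrix (Fin n) (Fin n) ℝ)
        + ((d^2) • (1 : Matrix (Fin n) (Fin n) ℝ) - D * D)
        + D * ((1 : Matrix (Fin n) (Fin n) ℝ) - G) * Dᴴ := by
      rw [hDh, hX]
      simp only [Matrix.mul_sub, Matrix.sub_mul, Matrix.mul_one]
      module
    rw [hsplit]
    exact (((psd_smul_one hscal).add hDsq)).add (hG1.mul_mul_conjTranspose_same D)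
  -- the middle matrix
  set S : Matrix (Fin n ⊕ Fin n) (Fin n ⊕ Fin n) ℝ :=
    fromBlocks X 0 0 0 + fromRows C W * G * fromCols C W with hS
  have hXblock : (fromBlocks X 0 0 0 :
      Matrix (Fin n ⊕ Fin n) (Fin n ⊕ Fin n) ℝ).PosSemidef := by
    have h := hXpsd.mul_mul_conjTranspose_same
      (fromRows (1 : Matrix (Fin n) (Fin n) ℝ) (0 : Matrix (Fin n) (Fin n) ℝ))
    rw [conjTranspose_fromRows_eq_fromCols_conjTranspose, fromRows_mul,
      fromRows_mul_fromCols] at h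
    simpa using h
  have hSpsd : S.PosSemidef := by
    refine hXblock.add ?_
    have h := hG.mul_mul_conjTranspose_same (fromRows C W)
    rwa [conjTranspose_fromRows_eq_fromCols_conjTranspose, hCh, hWh] at h
  -- blocks of S
  have hSblocks : S = fromBlocks (X + C*G*C) (C*G*W) (W*G*C) (W*G*W) := by
    rw [hS, fromRows_mul, fromRows_mul_fromCols, fromBlocks_add]
    simp
  -- E and conclusion
  set E : Matrix (Fin n ⊕ Fin m) (Fin n ⊕ Fin n) ℝ := fromBlocks 1 0 0 A with hE
  have hEh : Eᴴ = fromBlocks (1 : Matrix (Fin n) (Fin n) ℝ) 0 0 Aᵀ := by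
    rw [hE, fromBlocks_conjTranspose]
    simp [conjTranspose_eq_transpose_of_trivial]
  have hc0 : (0:ℝ) < 2*(γ*kp) := by positivity
  have hNpsd : ((2*(γ*kp))⁻¹ • S).PosSemidef := psd_smul hSpsd (by positivity)
  have hMpsd := hNpsd.mul_mul_conjTranspose_same E
  have hES : E * S * Eᴴ = (2*(γ*kp)) •
      (-(Matrix.fromBlocks (p • (1 : Matrix (Fin n) (Fin n) ℝ)) 0 0
            (1 : Matrix (Fin m) (Fin m) ℝ) *
          Matrix.fromBlocks (-1 + G * (1 - γ • B)) (-γ • (G * A.transpose))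
            ((kp - kp) • A + kp • (A * (G * (1 - γ • B)))) (-(γ * kp) • (A * G * A.transpose))
        + (Matrix.fromBlocks (-1 + G * (1 - γ • B)) (-γ • (G * A.transpose))
            ((kp - kp) • A + kp • (A * (G * (1 - γ • B)))) (-(γ * kp) • (A * G * A.transpose))).transpose *
          Matrix.fromBlocks (p • (1 : Matrix (Fin n) (Fin n) ℝ)) 0 0
            (1 : Matrix (Fin m) (Fin m) ℝ))) := by
    rw [hSblocks, hEh, hE]
    simp only [sub_self, zero_smul, zero_add, fromBlocks_transpose, fromBlocks_multiply,
      fromBlocks_add, fromBlocks_neg, ← fromBlocks_neg, neg_add_rev]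
    simp only [Matrix.one_mul, Matrix.mul_one, Matrix.zero_mul, Matrix.mul_zero,
      add_zero, zero_add, smul_neg, fromBlocks_neg, fromBlocks_smul]
    rw [fromBlocks_inj]
    refine ⟨?_, ?_, ?_, ?_⟩
    · simp only [hX, hW, hC, hD]
      simp only [Matrix.transpose_add, Matrix.transpose_sub, Matrix.transpose_smul,
        Matrix.transpose_mul, Matrix.transpose_neg, Matrix.transpose_one,
        Matrix.transpose_transpose, hBt, hGt,
        Matrix.mul_add, Matrix.add_mul, Matrix.mul_sub, Matrix.sub_mul,
        Matrix.neg_mul, Matrix.mul_neg, Matrix.smul_mul, Matrix.mul_smul,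
        smul_smul, smul_add, smul_sub, smul_neg, Matrix.one_mul, Matrix.mul_one,
        Matrix.mul_assoc]
      module
    · simp only [hX, hW, hC, hD]
      simp only [Matrix.transpose_add, Matrix.transpose_sub, Matrix.transpose_smul,
        Matrix.transpose_mul, Matrix.transpose_neg, Matrix.transpose_one,
        Matrix.transpose_transpose, hBt, hGt,
        Matrix.mul_add, Matrix.add_mul, Matrix.mul_sub, Matrix.sub_mul,
        Matrix.neg_mul, Matrix.mul_neg, Matrix.smul_mul, Matrix.mul_smul,
        smul_smul, smul_add, smul_sub, smul_neg, Matrix.one_mul, Matrix.mul_one,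
        Matrix.mul_assoc]
      module
    · simp only [hX, hW, hC, hD]
      simp only [Matrix.transpose_add, Matrix.transpose_sub, Matrix.transpose_smul,
        Matrix.transpose_mul, Matrix.transpose_neg, Matrix.transpose_one,
        Matrix.transpose_transpose, hBt, hGt,
        Matrix.mul_add, Matrix.add_mul, Matrix.mul_sub, Matrix.sub_mul,
        Matrix.neg_mul, Matrix.mul_neg, Matrix.smul_mul, Matrix.mul_smul,
        smul_smul, smul_add, smul_sub, smul_neg, Matrix.one_mul, Matrix.mul_one,
        Matrix.mul_assoc]
      module
    · simp only [hX, hW, hC, hD]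
      simp only [Matrix.transpose_add, Matrix.transpose_sub, Matrix.transpose_smul,
        Matrix.transpose_mul, Matrix.transpose_neg, Matrix.transpose_one,
        Matrix.transpose_transpose, hBt, hGt,
        Matrix.mul_add, Matrix.add_mul, Matrix.mul_sub, Matrix.sub_mul,
        Matrix.neg_mul, Matrix.mul_neg, Matrix.smul_mul, Matrix.mul_smul,
        smul_smul, smul_add, smul_sub, smul_neg, Matrix.one_mul, Matrix.mul_one,
        Matrix.mul_assoc]
      module
  have hfinal : E * ((2*(γ*kp))⁻¹ • S) * Eᴴ
      = -(Matrix.fromBlocks (p • (1 : Matrix (Fin n) (Fin n) ℝ)) 0 0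
            (1 : Matrix (Fin m) (Fin m) ℝ) *
          Matrix.fromBlocks (-1 + G * (1 - γ • B)) (-γ • (G * A.transpose))
            ((kp - kp) • A + kp • (A * (G * (1 - γ • B)))) (-(γ * kp) • (A * G * A.transpose))
        + (Matrix.fromBlocks (-1 + G * (1 - γ • B)) (-γ • (G * A.transpose))
            ((kp - kp) • A + kp • (A * (G * (1 - γ • B)))) (-(γ * kp) • (A * G * A.transpose))).transpose *
          Matrix.fromBlocks (p • (1 : Matrix (Fin n) (Fin n) ℝ)) 0 0
            (1 : Matrix (Fin m) (Fin m) ℝ)) := by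
    rw [Matrix.mul_smul, Matrix.smul_mul, hES, smul_smul,
      inv_mul_cancel₀ hc0.ne', one_smul]
  rw [hfinal] at hMpsd
  exact hMpsd
end

section
/- Let B, G ∈ ℝ^{n×n} symmetric with ρI ⪯ B ⪯ LI (ρ > 0), 0 ⪯ G ⪯ I, and parameters γ ∈ (0, 1/L], k_p > 0, p ∈ [max(k_p L/3, k_p(1 − 2γρ)/γ), k_p/γ]. Then the scalar inequality γ²ρ k_p(3p − k_p L) − (γp − k_p)(2γρ k_p + γp − k_p) ≥ 0 holds. -/
/-- scalar inequality of the Schur-complement step: for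
`0 < ρ ≤ L`, `γ ∈ (0, 1/L]`, `k_p > 0` and
`p ∈ [max(k_p L/3, k_p(1 − 2γρ)/γ), k_p/γ]`, one has
`3pγ²ρk_p − γ²k_p²Lρ − 2γρk_p(γp − k_p) − (γp − k_p)² ≥ 0`, equivalently
`γ²ρk_p(3p − k_pL) − (γp − k_p)(2γρk_p + γp − k_p) ≥ 0`. -/
theorem pipgd_scalar_inequality
    (ρ L γ kp p : ℝ) (hρ : 0 < ρ) (hρL : ρ ≤ L) (hkp : 0 < kp)
    (hγ : 0 < γ) (hγle : γ ≤ 1 / L)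
    (hplow : max (kp * L / 3) (kp * (1 - 2 * γ * ρ) / γ) ≤ p) (hphigh : p ≤ kp / γ) :
    γ ^ 2 * ρ * kp * (3 * p - kp * L) - (γ * p - kp) * (2 * γ * ρ * kp + γ * p - kp) ≥ 0 := by
  have h1 : kp * L / 3 ≤ p := le_trans (le_max_left _ _) hplow
  have h2 : kp * (1 - 2 * γ * ρ) / γ ≤ p := le_trans (le_max_right _ _) hplow
  have h2' : kp * (1 - 2 * γ * ρ) ≤ γ * p := by
    rw [div_le_iff₀ hγ] at h2; linarith
  have h3 : γ * p ≤ kp := by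
    rw [le_div_iff₀ hγ] at hphigh; linarith
  have ht1 : γ * p - kp ≤ 0 := by linarith
  have ht2 : 2 * γ * ρ * kp + γ * p - kp ≥ 0 := by nlinarith
  have h4 : (0:ℝ) ≤ 3 * p - kp * L := by linarith
  have hA : γ ^ 2 * ρ * kp * (3 * p - kp * L) ≥ 0 :=
    mul_nonneg (by positivity) h4
  nlinarith [mul_nonneg (neg_nonneg.mpr ht1) ht2]
end
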